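/- arXiv:2306.17081 — 6 statements merged into one kernel-verified Lean document; each statement's English description precedes it below -/
import Mathlib

section
/- Let U be an h-scattered F_q-subspace of V = F_{q^m}^k (i.e., ⟨U⟩_{F_{q^m}} = V and dim_{F_q}(W ∩ U) ≤ h for every F_{q^m}-subspace W of dimension h). If dim_{F_q} U > ⌊km/(h+1)⌋, then dim_{F_q} U = k. -/
/-!
If `μ₀, …, μ_{r-1} ∈ K` are `F`-independent and `r ≤ h + 1`, the sum `μ₀ U + ⋯ + μ_{r-1} U` is
direct, so `r · dim_F U ≤ dim_F V = km`. Directness is where scatteredness enters: at most `h + 1`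
`F`-independent vectors of `U` stay `K`-independent, for otherwise, once extended inside `U` to
`h + 1` such vectors, their `K`-span would lie in an `h`-dimensional `W` with
`dim_F (U ∩ W) ≥ h + 1`. For `h < m` take `r = h + 1`, which contradicts the hypothesis on
`dim_F U`; for `m ≤ h` take `r = m`, giving `dim_F U ≤ k`, while `⟨U⟩_K = V` gives `k ≤ dim_F U`.
-/

open Module Submodule

theorem Submodule.exists_le_le_finrank_eq {K V : Type*} [DivisionRing K] [AddCommGroup V]
    [Module K V] [FiniteDimensional K V] {A B : Submodule K V} (hAB : A ≤ B) {d : ℕ}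
    (hA : finrank K A ≤ d) (hB : d ≤ finrank K B) :
    ∃ C : Submodule K V, A ≤ C ∧ C ≤ B ∧ finrank K C = d := by
  induction d, hA using Nat.le_induction with
  | base => exact ⟨A, le_rfl, hAB, rfl⟩
  | succ d _ ih =>
    obtain ⟨C, hAC, hCB, hC⟩ := ih (by omega)
    obtain ⟨x, hxB, hxC⟩ := SetLike.exists_of_lt (lt_of_le_of_finrank_lt_finrank hCB (by omega))
    refine ⟨C ⊔ K ∙ x, hAC.trans le_sup_left, sup_le hCB ((span_singleton_le_iff_mem _ _).2 hxB),
      by rw [finrank_sup_span_singleton hxC, hC]⟩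

section Tower

variable {F K V : Type*} [Field F] [Field K] [Algebra F K] [AddCommGroup V] [Module K V]
  [Module F V] [IsScalarTower F K V]

theorem Submodule.finrank_span_le_finrank_of_tower (B : Submodule F V) [FiniteDimensional F B] :
    finrank K (span K (B : Set V)) ≤ finrank F B :=
  (LinearMap.finrank_le_finrank_of_surjective (B.surjective_tensorToSpan K)).trans_eq
    finrank_baseChange

variable (K) in
def Submodule.IsScattered (h : ℕ) (U : Submodule F V) : Prop :=
  ∀ W : Submodule K V, finrank K W = h → finrank F ↥(U ⊓ W.restrictScalars F) ≤ h

namespace Submodule.IsScattered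

variable [FiniteDimensional F V] {h : ℕ} {U : Submodule F V}

theorem finrank_span_eq (hU : U.IsScattered K h) (hhV : h ≤ finrank K V)
    (hhU : h < finrank F U) {B : Submodule F V} (hBU : B ≤ U) (hB : finrank F B ≤ h + 1) :
    finrank K (span K (B : Set V)) = finrank F B := by
  have : FiniteDimensional K V := .of_restrictScalars_finite F K V
  refine le_antisymm (finrank_span_le_finrank_of_tower B) ?_
  obtain ⟨g, hg⟩ : ∃ g, finrank F B + g = h + 1 := ⟨_, Nat.add_sub_of_le hB⟩
  induction g generalizing B with
  | zero =>
    by_contra! hlt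
    obtain ⟨W, hSW, -, hW⟩ := exists_le_le_finrank_eq (le_top : span K (B : Set V) ≤ ⊤)
      (d := h) (by omega) (by rwa [finrank_top])
    have hBW : B ≤ U ⊓ W.restrictScalars F := le_inf hBU fun x hx ↦ hSW (subset_span hx)
    have hBh := (finrank_mono hBW).trans (hU W hW)
    omega
  | succ g ih =>
    obtain ⟨x, hxU, hxB⟩ := SetLike.exists_of_lt (lt_of_le_of_finrank_lt_finrank hBU (by omega))
    have hspan : span K ((B ⊔ F ∙ x : Submodule F V) : Set V) = span K (B : Set V) ⊔ K ∙ x := by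
      rw [← span_eq B, ← span_union, span_span_of_tower, span_union, span_eq]
    have hx := finrank_sup_span_singleton hxB
    have hB' := ih (sup_le hBU ((span_singleton_le_iff_mem _ _).2 hxU)) (by omega) (by omega)
    rw [hspan, hx] at hB'
    have hsup := finrank_add_le_finrank_add_finrank (span K (B : Set V)) (K ∙ x)
    have hKx : finrank K (K ∙ x) ≤ 1 := by simpa using finrank_span_le_card (R := K) {x}
    omega

theorem linearIndependent (hU : U.IsScattered K h) (hhV : h ≤ finrank K V)
    (hhU : h < finrank F U) {ι : Type*} [Fintype ι] (hι : Fintype.card ι ≤ h + 1) {v : ι → V}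
    (hvU : ∀ i, v i ∈ U) (hv : LinearIndependent F v) : LinearIndependent K v := by
  have hspan : finrank F (span F (Set.range v)) = Fintype.card ι := finrank_span_eq_card hv
  rw [linearIndependent_iff_card_eq_finrank_span, Set.finrank, ← span_span_of_tower F K,
    hU.finrank_span_eq hhV hhU (span_le.2 (Set.range_subset_iff.2 hvU)) (hspan ▸ hι), hspan]

theorem eq_zero_of_sum_smul_eq_zero (hU : U.IsScattered K h) (hhV : h ≤ finrank K V)
    (hhU : h < finrank F U) {κ : Type*} [Fintype κ] (hκ : Fintype.card κ ≤ h + 1) {μ : κ → K}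
    (hμ : LinearIndependent F μ) {u : κ → V} (huU : ∀ j, u j ∈ U) (hsum : ∑ j, μ j • u j = 0) :
    u = 0 := by
  set B := span F (Set.range u)
  have hu : ∀ j, u j ∈ B := fun j ↦ subset_span ⟨j, rfl⟩
  let v := Module.finBasis F B
  have hv : LinearIndependent K (fun l ↦ (v l : V)) := by
    refine hU.linearIndependent hhV hhU ?_ (fun l ↦ span_le.2 (Set.range_subset_iff.2 huU) (v l).2)
      (v.linearIndependent.map' B.subtype B.ker_subtype)
    rw [Fintype.card_fin]
    exact (finrank_range_le_card u).trans hκ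
  have hcoord (j : κ) : u j = ∑ l, v.repr ⟨u j, hu j⟩ l • (v l : V) := by
    conv_lhs => rw [← show ((⟨u j, hu j⟩ : B) : V) = u j from rfl, ← v.sum_repr ⟨u j, hu j⟩]
    simp only [coe_sum, coe_smul]
  have hc := Fintype.linearIndependent_iff.1 (linearIndependent_smul hμ hv)
    (fun p ↦ v.repr ⟨u p.1, hu p.1⟩ p.2) (by
      rw [Fintype.sum_prod_type, ← hsum]
      refine Finset.sum_congr rfl fun j _ ↦ ?_
      rw [hcoord j, Finset.smul_sum]
      exact Finset.sum_congr rfl fun l _ ↦ smul_comm _ _ _)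
  funext j
  rw [hcoord j]
  simp [fun l ↦ hc (j, l)]

theorem mul_finrank_le (hU : U.IsScattered K h) (hhV : h ≤ finrank K V)
    (hhU : h < finrank F U) {r : ℕ} (hrh : r ≤ h + 1) (hrK : r ≤ finrank F K) :
    r * finrank F U ≤ finrank F V := by
  obtain ⟨μ, hμ⟩ := exists_linearIndependent_of_le_finrank hrK
  let Φ : (Fin r → U) →ₗ[F] V := ∑ j, μ j • (U.subtype ∘ₗ LinearMap.proj j)
  have hΦ : Function.Injective Φ := by
    refine (injective_iff_map_eq_zero Φ).2 fun u hu ↦ funext fun j ↦ Subtype.ext ?_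
    have := hU.eq_zero_of_sum_smul_eq_zero hhV hhU (by simpa using hrh) hμ (fun j ↦ (u j).2)
      (by simpa [Φ] using hu)
    exact congrFun this j
  simpa [finrank_pi_fintype] using LinearMap.finrank_le_finrank_of_injective hΦ

end Submodule.IsScattered

end Tower

theorem stmt4_general (q m k h : ℕ) (hhk : h < k)
    (F K : Type*) [Field F] [Field K] [Algebra F K]
    [Fintype F] [Fintype K] (hF : Fintype.card F = q) (hcard : Fintype.card K = q ^ m)
    (U : Submodule F (Fin k → K))
    (hspan : Submodule.span K (U : Set (Fin k → K)) = ⊤)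
    (hscatt : ∀ W : Submodule K (Fin k → K), Module.finrank K W = h →
      Module.finrank F ↥(U ⊓ W.restrictScalars F) ≤ h)
    (hdim : k * m / (h + 1) < Module.finrank F U) :
    Module.finrank F U = k := by
  have : Module.Finite F K := .of_finite
  have hFK : finrank F K = m := by
    refine Nat.pow_right_injective (Fintype.one_lt_card (α := F)) ?_
    change Fintype.card F ^ finrank F K = Fintype.card F ^ m
    rw [← card_eq_pow_finrank, hcard, hF]
  have hV : finrank F (Fin k → K) = m * k := by
    rw [← finrank_mul_finrank F K, hFK, finrank_fin_fun]
  have hkU : k ≤ finrank F U := by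
    have := U.finrank_span_le_finrank_of_tower (K := K)
    rwa [hspan, finrank_top, finrank_fin_fun] at this
  have hU : U.IsScattered K h := hscatt
  have hhV : h ≤ finrank K (Fin k → K) := by rw [finrank_fin_fun]; omega
  rcases le_or_gt m h with hmh | hhm
  · have := hU.mul_finrank_le hhV (by omega) (by omega) hFK.ge
    rw [hV] at this
    exact le_antisymm (Nat.le_of_mul_le_mul_left this (hFK ▸ finrank_pos)) hkU
  · have := hU.mul_finrank_le hhV (by omega) le_rfl (hFK ▸ hhm)
    rw [hV, mul_comm m] at this
    exact absurd hdim (not_lt.2 ((Nat.le_div_iff_mul_le h.succ_pos).2 (by linarith)))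

/-- If `U` is an `h`-scattered `F_q`-subspace of `V = F_{q^m}^k` with
`dim_{F_q} U > ⌊km/(h+1)⌋`, then `dim_{F_q} U = k`. -/
theorem stmt4 (q m k h : ℕ) (hq : ∃ p n : ℕ, p.Prime ∧ 0 < n ∧ q = p ^ n)
    (hm : 2 ≤ m) (hh : 0 < h) (hhk : h < k)
    (F K : Type*) [Field F] [Field K] [Algebra F K]
    [Fintype F] [Fintype K] (hF : Fintype.card F = q) (hcard : Fintype.card K = q ^ m)
    (U : Submodule F (Fin k → K))
    (hspan : Submodule.span K (U : Set (Fin k → K)) = ⊤)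
    (hscatt : ∀ W : Submodule K (Fin k → K), Module.finrank K W = h →
      Module.finrank F ↥(U ⊓ W.restrictScalars F) ≤ h)
    (hdim : k * m / (h + 1) < Module.finrank F U) :
    Module.finrank F U = k :=
  stmt4_general q m k h hhk F K hF hcard U hspan hscatt hdim
end

section
/- Let m ≥ h+1 and let U be an h-scattered F_q-subspace of V = F_{q^m}^k with dim_{F_q} U ≥ ⌊m(k−1)/(h+1)⌋ + 1. Then for every v ∈ V \ {0}, there exist vectors u_1, …, u_{h+1} ∈ U, linearly independent over F_q, such that v ∈ ⟨u_1, …, u_{h+1}⟩_{F_{q^m}}. In particular the linear set L_U is a (ρ−1)-saturating set of PG(k−1, q^m) for some ρ ≤ h+1. -/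
/-!
Fix `c₀, …, c_h ∈ K` linearly independent over `F`. Counting `F`-dimensions, the map
`(u_i) ↦ ∑ c_i u_i` from `U^{h+1}` to `V ⧸ ⟨v⟩_K` has a nonzero kernel element `u`. Put the `u_i`
into an `(h+1)`-dimensional `F`-subspace of `U` with `F`-basis `e`. Scatteredness forces `e` to be
`K`-independent: otherwise its `K`-span lies in an `h`-dimensional `K`-subspace meeting `U` in
`F`-dimension `h+1`. Then the products `c_i e_j` are `F`-independent, so `∑ c_i u_i ≠ 0`; being a
multiple of `v`, it puts `v` in the `K`-span of `e`.
-/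

open Module Submodule

theorem Submodule.exists_le_le_finrank_eq_s5 {K V : Type*} [DivisionRing K] [AddCommGroup V]
    [Module K V] [Module.Finite K V] {p q : Submodule K V} (hpq : p ≤ q) {n : ℕ}
    (hp : finrank K p ≤ n) (hq : n ≤ finrank K q) :
    ∃ r : Submodule K V, p ≤ r ∧ r ≤ q ∧ finrank K r = n := by
  obtain ⟨d, rfl⟩ := Nat.exists_eq_add_of_le hp
  induction d generalizing p with
  | zero => exact ⟨p, le_rfl, hpq, rfl⟩
  | succ d ih =>
    obtain ⟨x, hxq, hxp⟩ : ∃ x ∈ q, x ∉ p :=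
      SetLike.exists_of_lt (lt_of_le_of_ne hpq (by rintro rfl; omega))
    have hrank := finrank_sup_span_singleton hxp
    obtain ⟨r, hr, hrq, hrank'⟩ := ih (p := p ⊔ K ∙ x)
      (sup_le hpq ((span_singleton_le_iff_mem x q).2 hxq)) (by omega) (by omega)
    exact ⟨r, le_sup_left.trans hr, hrq, by omega⟩

section Scattered

variable {F K V : Type*} [Field F] [Field K] [Algebra F K] [AddCommGroup V] [Module K V]
  [Module F V] [IsScalarTower F K V]

theorem eq_zero_of_sum_smul_eq_zero_of_mem_span {ι κ : Type*} [Fintype ι] [Fintype κ]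
    {c : ι → K} (hc : LinearIndependent F c) {b : κ → V} (hb : LinearIndependent K b)
    {u : ι → V} (hu : ∀ i, u i ∈ span F (Set.range b)) (hsum : ∑ i, c i • u i = 0) (i : ι) :
    u i = 0 := by
  choose a ha using fun i ↦ (mem_span_range_iff_exists_fun F).1 (hu i)
  have ha0 := Fintype.linearIndependent_iff.1 (linearIndependent_smul hc hb)
    (fun p ↦ a p.1 p.2) (by
      simpa [Fintype.sum_prod_type, ← ha, Finset.smul_sum, smul_comm (a _ _)] using hsum)
  simp [← ha i, fun j ↦ ha0 (i, j)]

theorem linearIndependent_of_finrank_inf_restrictScalars_le [FiniteDimensional F K]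
    [FiniteDimensional K V] {U : Submodule F V} {h : ℕ} (hhV : h ≤ finrank K V)
    (hscatt : ∀ W : Submodule K V, finrank K W = h → finrank F ↥(U ⊓ W.restrictScalars F) ≤ h)
    {u : Fin (h + 1) → V} (hu : ∀ i, u i ∈ U) (hind : LinearIndependent F u) :
    LinearIndependent K u := by
  have : Module.Finite F V := .trans K V
  by_contra hdep
  have hS : finrank K (span K (Set.range u)) ≤ h := by
    have := finrank_range_le_card (R := K) u
    rw [linearIndependent_iff_card_eq_finrank_span] at hdep
    simp only [Fintype.card_fin, Set.finrank] at this hdep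
    omega
  obtain ⟨W, hSW, -, hW⟩ := exists_le_le_finrank_eq_s5 le_top hS (by rwa [finrank_top])
  have hle : span F (Set.range u) ≤ U ⊓ W.restrictScalars F := span_le.2 <| by
    rintro _ ⟨i, rfl⟩
    exact ⟨hu i, hSW (subset_span ⟨i, rfl⟩)⟩
  have hcard := (finrank_span_eq_card hind).symm.trans_le (finrank_mono hle)
  rw [Fintype.card_fin] at hcard
  exact (hscatt W hW).not_gt hcard

theorem exists_ne_zero_sum_smul_mem_span_singleton [FiniteDimensional F K]
    [FiniteDimensional K V] {ι : Type*} [Fintype ι] (c : ι → K) {U : Submodule F V}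
    (hU : finrank F K * (finrank K V - 1) < Fintype.card ι * finrank F U) {v : V} (hv : v ≠ 0) :
    ∃ u : ι → U, u ≠ 0 ∧ ∑ i, c i • (u i : V) ∈ K ∙ v := by
  have : Module.Finite F V := .trans K V
  let φ : (ι → U) →ₗ[F] V ⧸ (K ∙ v) :=
    (K ∙ v).mkQ.restrictScalars F ∘ₗ ∑ i, c i • (U.subtype ∘ₗ LinearMap.proj i)
  have hφ : finrank F (V ⧸ K ∙ v) < finrank F (ι → U) := by
    rw [← finrank_mul_finrank F K, finrank_quotient, finrank_span_singleton hv,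
      finrank_pi_fintype]
    simpa [mul_comm] using hU
  obtain ⟨u, hu, hu0⟩ :=
    exists_mem_ne_zero_of_ne_bot (LinearMap.ker_ne_bot_of_finrank_lt (f := φ) hφ)
  refine ⟨u, hu0, ?_⟩
  rw [← Submodule.Quotient.mk_eq_zero, ← mkQ_apply, map_sum]
  simpa [φ] using hu

theorem exists_linearIndependent_mem_span_of_finrank_lt [FiniteDimensional F K]
    [FiniteDimensional K V] {U : Submodule F V} {h : ℕ} (hhK : h + 1 ≤ finrank F K)
    (hhV : h < finrank K V)
    (hscatt : ∀ W : Submodule K V, finrank K W = h → finrank F ↥(U ⊓ W.restrictScalars F) ≤ h)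
    (hU : finrank F K * (finrank K V - 1) < (h + 1) * finrank F U) {v : V} (hv : v ≠ 0) :
    ∃ u : Fin (h + 1) → V, (∀ i, u i ∈ U) ∧ LinearIndependent F u ∧ v ∈ span K (Set.range u) := by
  have : Module.Finite F V := .trans K V
  obtain ⟨c, hc⟩ := exists_linearIndependent_of_le_finrank hhK
  obtain ⟨u, hu0, hw⟩ :=
    exists_ne_zero_sum_smul_mem_span_singleton c (by rwa [Fintype.card_fin]) hv
  obtain ⟨W, huW, hWU, hWrank⟩ := exists_le_le_finrank_eq_s5
    (span_le.2 (Set.range_subset_iff.2 fun i ↦ (u i).2))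
    ((finrank_range_le_card _).trans_eq (Fintype.card_fin _))
    (Nat.lt_of_mul_lt_mul_left ((Nat.mul_le_mul hhK (by omega)).trans_lt hU))
  let e : Fin (h + 1) → V := fun i ↦ finBasisOfFinrankEq F W hWrank i
  have heU : ∀ i, e i ∈ U := fun i ↦ hWU (Subtype.prop _)
  have he : LinearIndependent F e :=
    (finBasisOfFinrankEq F W hWrank).linearIndependent.map' W.subtype W.ker_subtype
  have hWe : W = span F (Set.range e) := by
    rw [Set.range_comp', ← W.coe_subtype, ← map_span, Basis.span_eq, map_subtype_top]
  have hue : ∀ i, (u i : V) ∈ span F (Set.range e) := fun i ↦ hWe ▸ huW (subset_span ⟨i, rfl⟩)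
  have hw0 : ∑ i, c i • (u i : V) ≠ 0 := fun hw0 ↦ hu0 <| funext fun i ↦ Subtype.ext <|
    eq_zero_of_sum_smul_eq_zero_of_mem_span hc
      (linearIndependent_of_finrank_inf_restrictScalars_le hhV.le hscatt heU he) hue hw0 i
  obtain ⟨a, ha⟩ := mem_span_singleton.1 hw
  have ha0 : a ≠ 0 := by rintro rfl; exact hw0 (by rw [← ha, zero_smul])
  refine ⟨e, heU, he, ?_⟩
  rw [← inv_smul_smul₀ ha0 v, ha]
  exact smul_mem _ _ <| sum_mem fun i _ ↦ smul_mem _ _ (span_le_restrictScalars F K _ (hue i))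

end Scattered

theorem stmt5_general (q m k h : ℕ)
    (hm : h + 1 ≤ m) (hhk : h < k)
    (F K : Type*) [Field F] [Field K] [Algebra F K]
    [Fintype F] [Fintype K] (hF : Fintype.card F = q) (hcard : Fintype.card K = q ^ m)
    (U : Submodule F (Fin k → K))
    (hscatt : ∀ W : Submodule K (Fin k → K), Module.finrank K W = h →
      Module.finrank F ↥(U ⊓ W.restrictScalars F) ≤ h)
    (hdim : m * (k - 1) / (h + 1) + 1 ≤ Module.finrank F U) :
    ∀ v : Fin k → K, v ≠ 0 → ∃ u : Fin (h + 1) → (Fin k → K),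
      (∀ i, u i ∈ U) ∧ LinearIndependent F u ∧ v ∈ Submodule.span K (Set.range u) := by
  intro v hv
  have : Module.Finite F K := .of_finite
  have hKm : finrank F K = m := by
    refine Nat.pow_right_injective (hF ▸ Fintype.one_lt_card) ?_
    dsimp only
    rw [← hF, ← card_eq_pow_finrank, hcard, hF]
  have hVk : finrank K (Fin k → K) = k := by simp
  refine exists_linearIndependent_mem_span_of_finrank_lt (hKm ▸ hm) (by rwa [hVk]) hscatt ?_ hv
  rw [hKm, hVk]
  exact (Nat.lt_mul_div_succ _ h.succ_pos).trans_le (Nat.mul_le_mul_left _ hdim)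

/-- If `U` is an `h`-scattered `F_q`-subspace of `V = F_{q^m}^k` of `F_q`-dimension at
least `⌊m(k-1)/(h+1)⌋ + 1` and `m ≥ h+1`, then every nonzero `v ∈ V` lies in the
`F_{q^m}`-span of `h+1` vectors of `U` that are linearly independent over `F_q`. -/
theorem stmt5 (q m k h : ℕ) (hq : ∃ p n : ℕ, p.Prime ∧ 0 < n ∧ q = p ^ n)
    (hm : h + 1 ≤ m) (hh : 0 < h) (hhk : h < k)
    (F K : Type*) [Field F] [Field K] [Algebra F K]
    [Fintype F] [Fintype K] (hF : Fintype.card F = q) (hcard : Fintype.card K = q ^ m)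
    (U : Submodule F (Fin k → K))
    (hspan : Submodule.span K (U : Set (Fin k → K)) = ⊤)
    (hscatt : ∀ W : Submodule K (Fin k → K), Module.finrank K W = h →
      Module.finrank F ↥(U ⊓ W.restrictScalars F) ≤ h)
    (hdim : m * (k - 1) / (h + 1) + 1 ≤ Module.finrank F U) :
    ∀ v : Fin k → K, v ≠ 0 → ∃ u : Fin (h + 1) → (Fin k → K),
      (∀ i, u i ∈ U) ∧ LinearIndependent F u ∧ v ∈ Submodule.span K (Set.range u) :=
  stmt5_general q m k h hm hhk F K hF hcard U hscatt hdim
end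

section
/- For all integers m ≥ 4 even, r ≥ 3 odd with (r > 3, or r = 3 and m < 12), and all integers t with 0 < t < m−2: ⌈(m/(m−2−t)) · (r(m−2)/2)⌉ − 2 − t > mr/2 − 1. -/
/-!
Write `m = 2a` and `ρ = m - 2 - t > 0`. Since `m - 2 = ρ + t`, the quantity under the ceiling is
`a r (ρ + t) / ρ = a r + a r t / ρ`, so the inequality amounts to `ρ (t + 1) < a r t`.
As `ρ < 2a`, this holds once `r ≥ 4`, i.e. `r ≥ 5` for odd `r`. For `r = 3` the difference
`3at - ρ(t + 1)` equals `a(t - 2) + (t + 1)(t + 2)`, which is positive for `t ≥ 2`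
and equals `6 - a` for `t = 1`; this is where `m < 12` is needed.
-/

lemma mul_succ_lt_of_four_le {a r t ρ : ℕ} (hρ : ρ + t + 2 = a + a) (ht : 0 < t) (hr : 4 ≤ r) :
    ρ * (t + 1) < t * a * r :=
  calc ρ * (t + 1) < (a + a) * (t + 1) := by gcongr; omega
    _ ≤ t * a * 4 := by nlinarith
    _ ≤ t * a * r := by gcongr

lemma mul_succ_lt_mul_three {a t ρ : ℕ} (hρ : ρ + t + 2 = a + a) (ht : 0 < t) (ha : a < 6) :
    ρ * (t + 1) < t * a * 3 := by
  obtain rfl | h2t : t = 1 ∨ 2 ≤ t := by omega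
  · omega
  · have hρ' : ρ = a + a - 2 - t := by omega
    subst hρ'
    zify [show t + 2 ≤ a + a by omega]
    nlinarith

lemma add_lt_ceil {a r t ρ : ℕ} (hρ : ρ + t + 2 = a + a) (hρpos : 0 < ρ)
    (h : ρ * (t + 1) < t * a * r) :
    ((a * r : ℕ) : ℤ) + t + 1 <
      ⌈((a + a : ℕ) : ℚ) / (((a + a : ℕ) : ℚ) - 2 - t) * (r * (((a + a : ℕ) : ℚ) - 2) / 2)⌉ := by
  have hm : ((a + a : ℕ) : ℚ) = ρ + t + 2 := by exact_mod_cast hρ.symm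
  have hρq_pos : (0 : ℚ) < ρ := by exact_mod_cast hρpos
  have hexpr : ((a + a : ℕ) : ℚ) / (((a + a : ℕ) : ℚ) - 2 - t) * (r * (((a + a : ℕ) : ℚ) - 2) / 2)
      = a * r + a * r * t / ρ := by
    have ha : (a : ℚ) = (ρ + t + 2) / 2 := by push_cast at hm; linarith
    rw [hm, ha, show (ρ + t + 2 : ℚ) - 2 - t = ρ by ring]
    field_simp
    ring
  have hfrac : (t : ℚ) + 1 < a * r * t / ρ := by
    rw [lt_div_iff₀ hρq_pos]
    exact_mod_cast (show (t + 1) * ρ < a * r * t by linarith [Nat.mul_comm (t * a) r])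
  rw [hexpr, Int.lt_ceil]
  push_cast
  linarith

theorem stmt9_general (m r t : ℕ) (hme : Even m) (hro : Odd r)
    (hcase : 3 < r ∨ (r = 3 ∧ m < 12)) (ht : 0 < t) (htm : t < m - 2) :
    (⌈(m : ℚ) / ((m : ℚ) - 2 - (t : ℚ)) * ((r : ℚ) * ((m : ℚ) - 2) / 2)⌉ : ℤ) - 2 - t >
      ((m * r / 2 : ℕ) : ℤ) - 1 := by
  obtain ⟨a, rfl⟩ := hme
  have hρ : (a + a - 2 - t) + t + 2 = a + a := by omega
  have hkey : (a + a - 2 - t) * (t + 1) < t * a * r := by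
    rcases hcase with h3r | ⟨rfl, hm12⟩
    · have hr4 : 4 ≤ r := by obtain ⟨k, rfl⟩ := hro; omega
      exact mul_succ_lt_of_four_le hρ ht hr4
    · exact mul_succ_lt_mul_three hρ ht (by omega)
  have hhalf : (a + a) * r / 2 = a * r := by rw [← two_mul, mul_assoc]; simp
  have := add_lt_ceil hρ (by omega) hkey
  rw [hhalf]
  omega

/-- Arithmetic inequality from Corollary 3.9: for `m ≥ 4` even, `r ≥ 3` odd with
(`r > 3`, or `r = 3` and `m < 12`), and `0 < t < m - 2`,
`⌈(m/(m-2-t)) · (r(m-2)/2)⌉ - 2 - t > mr/2 - 1`. -/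
theorem stmt9 (m r t : ℕ) (hm4 : 4 ≤ m) (hme : Even m) (hr : 3 ≤ r) (hro : Odd r)
    (hcase : 3 < r ∨ (r = 3 ∧ m < 12)) (ht : 0 < t) (htm : t < m - 2) :
    (⌈(m : ℚ) / ((m : ℚ) - 2 - (t : ℚ)) * ((r : ℚ) * ((m : ℚ) - 2) / 2)⌉ : ℤ) - 2 - t >
      ((m * r / 2 : ℕ) : ℤ) - 1 :=
  stmt9_general m r t hme hro hcase ht htm
end

section
/- Let q be an even prime power and β ∈ F_q^*. The plane affine curve over F_q defined by X^2 + X + (β^3 + β^2 + 1)/β^4 + 1/Z = 0 is absolutely irreducible. -/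
/-!
The polynomial has degree one in `Z = X 1`: it is `(X² + X + c) Z + 1`. In any factorization one
factor has degree zero in `Z`, hence divides the constant term `1` and is a unit.
-/

open Polynomial in
theorem Polynomial.irreducible_C_mul_X_add_one {R : Type*} [CommRing R] [IsDomain R] {a : R}
    (ha : a ≠ 0) : Irreducible (C a * X + 1) :=
  irreducible_of_degree_eq_one_of_isRelPrime_coeff (by compute_degree!)
    (by simpa using isRelPrime_one_left)

namespace MvPolynomial

variable {R σ : Type*}

theorem optionEquivLeft_rename_some [CommSemiring R] (p : MvPolynomial σ R) :
    optionEquivLeft R σ (rename some p) = Polynomial.C p := by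
  have : (optionEquivLeft R σ).toAlgHom.comp (rename some) = Polynomial.CAlgHom :=
    algHom_ext fun i ↦ by simp [optionEquivLeft_X_some]
  exact DFunLike.congr_fun this p

theorem X_sq_add_X_add_C_ne_zero [CommSemiring R] [Nontrivial R] (i : σ) (c : R) :
    (X i ^ 2 + X i + C c : MvPolynomial σ R) ≠ 0 := by
  classical
  intro h
  have := congrArg (coeff (Finsupp.single i 2)) h
  simp [coeff_X_pow, coeff_X, coeff_C, Finsupp.single_eq_single_iff,
    eq_comm (a := (0 : σ →₀ ℕ))] at this

theorem irreducible_rename_some_mul_X_none_add_one [CommRing R] [IsDomain R]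
    {p : MvPolynomial σ R} (hp : p ≠ 0) :
    Irreducible (rename some p * X none + 1 : MvPolynomial (Option σ) R) := by
  rw [← MulEquiv.irreducible_iff (optionEquivLeft R σ).toMulEquiv]
  convert Polynomial.irreducible_C_mul_X_add_one hp
  simp [optionEquivLeft_rename_some, optionEquivLeft_X_none]

end MvPolynomial

open MvPolynomial in
theorem stmt10_general (F : Type*) [Field F] (β : F) :
    Irreducible
      ((MvPolynomial.X 0) ^ 2 * MvPolynomial.X 1 + MvPolynomial.X 0 * MvPolynomial.X 1 +
        MvPolynomial.C (algebraMap F (AlgebraicClosure F) ((β ^ 3 + β ^ 2 + 1) / β ^ 4)) *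
          MvPolynomial.X 1 + 1 :
        MvPolynomial (Fin 2) (AlgebraicClosure F)) := by
  set c := algebraMap F (AlgebraicClosure F) ((β ^ 3 + β ^ 2 + 1) / β ^ 4)
  rw [← MulEquiv.irreducible_iff (renameEquiv _ (finSuccEquiv' (1 : Fin 2))).toMulEquiv]
  convert irreducible_rename_some_mul_X_none_add_one (X_sq_add_X_add_C_ne_zero (0 : Fin 1) c)
  simp only [MulEquiv.coe_mk, AlgEquiv.toEquiv_eq_coe, EquivLike.coe_coe, renameEquiv_apply,
    map_add, map_mul, map_pow, map_one, rename_X, rename_C, finSuccEquiv'_at,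
    show finSuccEquiv' (1 : Fin 2) 0 = some 0 from rfl]
  ring

/-- The plane curve `X² + X + (β³+β²+1)/β⁴ + 1/Z = 0`, i.e. the polynomial
`X²Z + XZ + ((β³+β²+1)/β⁴)Z + 1`, is absolutely irreducible over `F_q`, `q` even. -/
theorem stmt10 (q : ℕ) (hq : ∃ p n : ℕ, p.Prime ∧ 0 < n ∧ q = p ^ n) (hq2 : Even q)
    (F : Type*) [Field F] [Fintype F] (hF : Fintype.card F = q) (β : F) (hβ : β ≠ 0) :
    Irreducible
      ((MvPolynomial.X 0) ^ 2 * MvPolynomial.X 1 + MvPolynomial.X 0 * MvPolynomial.X 1 +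
        MvPolynomial.C (algebraMap F (AlgebraicClosure F) ((β ^ 3 + β ^ 2 + 1) / β ^ 4)) *
          MvPolynomial.X 1 + 1 :
        MvPolynomial (Fin 2) (AlgebraicClosure F)) :=
  stmt10_general F β
end

section
/- Let q be an even prime power with q ≥ 64 and let β ∈ F_q^*. Then there exists z ∈ F_q with z(z+1)(z−β)(z^2 + zβ^2 + zβ + 1)(z^2 + zβ^3 + zβ^2 + zβ + β^3 + β^2 + 1)(zβ^3 + β + 1)(z^3 + z) ≠ 0 such that Tr_{q/2}((zβ^3 + zβ^2 + z + β)(z+β) / (z^2 β^4)) = 0. -/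
/-!
In characteristic 2, with `y = (zβ)⁻¹` the argument of the trace is `c + z⁻¹ + (y² + y)` where
`c = (β³ + β² + 1)/β⁴`, and `Tr(y² + y) = 0` because the trace is Frobenius-invariant. So it
suffices to find `z` with `Tr(z⁻¹) = Tr(c)` that is not a root of the degree-11 polynomial
`exceptionalPoly β` (which vanishes at `0`). Every fibre of the trace has `q/2 ≥ 32` elements,
more than the at most 11 roots to avoid.
-/

open Polynomial Finset

namespace FiniteField

variable {K L : Type*} [Field K] [Fintype K] [Field L] [Algebra K L]

theorem algebraTrace_pow_card [Algebra.IsAlgebraic K L] (x : L) :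
    Algebra.trace K L (x ^ Fintype.card K) = Algebra.trace K L x :=
  Algebra.trace_eq_of_algEquiv (frobeniusAlgEquivOfAlgebraic K L) x

theorem card_mul_card_filter_trace_eq [Fintype L] [DecidableEq K] (t : K) :
    Fintype.card K * #{x : L | Algebra.trace K L x = t} = Fintype.card L := by
  have hfiber (s : K) :
      #{x : L | Algebra.trace K L x = s} = #{x : L | Algebra.trace K L x = t} :=
    AddMonoidHom.card_fiber_eq_of_mem_range (Algebra.trace K L).toAddMonoidHom
      (Algebra.trace_surjective K L s) (Algebra.trace_surjective K L t)
  calc Fintype.card K * #{x : L | Algebra.trace K L x = t}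
      = ∑ s : K, #{x : L | Algebra.trace K L x = s} := by
        rw [sum_congr rfl fun s _ => hfiber s, sum_const, card_univ, smul_eq_mul]
    _ = Fintype.card L :=
        (card_eq_sum_card_fiberwise fun x _ => mem_univ (Algebra.trace K L x)).symm

theorem exists_eval_ne_zero_trace_inv_eq [Fintype L] {P : L[X]} (hP : P ≠ 0)
    (hdeg : Fintype.card K * P.natDegree < Fintype.card L) (t : K) :
    ∃ z : L, P.eval z ≠ 0 ∧ Algebra.trace K L z⁻¹ = t := by
  classical
  have hinv : #{z : L | Algebra.trace K L z⁻¹ = t} = #{x : L | Algebra.trace K L x = t} :=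
    card_equiv (Equiv.inv L) (by simp)
  have hroots : #P.roots.toFinset < #{z : L | Algebra.trace K L z⁻¹ = t} := by
    have hfiber := card_mul_card_filter_trace_eq (L := L) t
    have hnroots := (Multiset.toFinset_card_le P.roots).trans (card_roots' P)
    rw [hinv]
    nlinarith [Fintype.card_pos (α := K)]
  obtain ⟨z, hzt, hzP⟩ := exists_mem_notMem_of_card_lt_card hroots
  refine ⟨z, fun h => hzP ?_, (mem_filter.mp hzt).2⟩
  rw [Multiset.mem_toFinset, mem_roots hP]
  exact h

theorem trace_sq_add_self [Finite L] [Algebra (ZMod 2) L] (y : L) :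
    Algebra.trace (ZMod 2) L (y ^ 2 + y) = 0 := by
  have hsq := algebraTrace_pow_card (K := ZMod 2) y
  rw [ZMod.card] at hsq
  rw [map_add, hsq]
  exact CharTwo.add_self_eq_zero _

end FiniteField

section Exceptional

variable {K : Type*} [Field K]

noncomputable def exceptionalPoly (β : K) : K[X] :=
  X * (X + 1) * (X - C β) * (X ^ 2 + C (β ^ 2 + β) * X + 1) *
    (X ^ 2 + C (β ^ 3 + β ^ 2 + β) * X + C (β ^ 3 + β ^ 2 + 1)) *
    (C (β ^ 3) * X + C (β + 1)) * (X ^ 3 + X)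

theorem eval_exceptionalPoly (β z : K) :
    (exceptionalPoly β).eval z =
      z * (z + 1) * (z - β) * (z ^ 2 + z * β ^ 2 + z * β + 1) *
        (z ^ 2 + z * β ^ 3 + z * β ^ 2 + z * β + β ^ 3 + β ^ 2 + 1) *
        (z * β ^ 3 + β + 1) * (z ^ 3 + z) := by
  simp only [exceptionalPoly, eval_mul, eval_add, eval_sub, eval_pow, eval_X, eval_C, eval_one]
  ring

theorem natDegree_exceptionalPoly {β : K} (hβ : β ≠ 0) : (exceptionalPoly β).natDegree = 11 := by
  unfold exceptionalPoly
  compute_degree <;> simp [hβ]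

theorem exceptionalPoly_ne_zero {β : K} (hβ : β ≠ 0) : exceptionalPoly β ≠ 0 :=
  ne_zero_of_natDegree_gt (n := 0) (by rw [natDegree_exceptionalPoly hβ]; norm_num)

theorem trace_argument_eq [CharP K 2] {β z : K} (hβ : β ≠ 0) (hz : z ≠ 0) :
    (z * β ^ 3 + z * β ^ 2 + z + β) * (z + β) / (z ^ 2 * β ^ 4) =
      (β ^ 3 + β ^ 2 + 1) / β ^ 4 + z⁻¹ + ((z * β)⁻¹ ^ 2 + (z * β)⁻¹) := by
  field_simp
  linear_combination (z * β) * CharTwo.two_eq_zero (R := K)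

end Exceptional

theorem stmt11_general (q : ℕ) (hq64 : 64 ≤ q)
    (K : Type*) [Field K] [Fintype K] [Algebra (ZMod 2) K] (hK : Fintype.card K = q)
    (β : K) (hβ : β ≠ 0) :
    ∃ z : K,
      z * (z + 1) * (z - β) * (z ^ 2 + z * β ^ 2 + z * β + 1) *
        (z ^ 2 + z * β ^ 3 + z * β ^ 2 + z * β + β ^ 3 + β ^ 2 + 1) *
        (z * β ^ 3 + β + 1) * (z ^ 3 + z) ≠ 0 ∧
      Algebra.trace (ZMod 2) K
        ((z * β ^ 3 + z * β ^ 2 + z + β) * (z + β) / (z ^ 2 * β ^ 4)) = 0 := by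
  have : CharP K 2 := charP_of_injective_algebraMap (algebraMap (ZMod 2) K).injective 2
  obtain ⟨z, hPz, htr⟩ := FiniteField.exists_eval_ne_zero_trace_inv_eq
    (exceptionalPoly_ne_zero hβ)
    (by rw [natDegree_exceptionalPoly hβ, ZMod.card, hK]; omega)
    (Algebra.trace (ZMod 2) K ((β ^ 3 + β ^ 2 + 1) / β ^ 4))
  have hz : z ≠ 0 := by
    rintro rfl
    simp [eval_exceptionalPoly] at hPz
  refine ⟨z, by rwa [← eval_exceptionalPoly], ?_⟩
  rw [trace_argument_eq hβ hz, map_add, map_add, htr, FiniteField.trace_sq_add_self, add_zero]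
  exact CharTwo.add_self_eq_zero _

/-- For `q ≥ 64` even and `β ∈ F_q*`, there is `z ∈ F_q` avoiding the exceptional roots
such that `Tr_{q/2}((zβ³+zβ²+z+β)(z+β)/(z²β⁴)) = 0`. -/
theorem stmt11 (q : ℕ) (hq : ∃ e : ℕ, 0 < e ∧ q = 2 ^ e) (hq64 : 64 ≤ q)
    (K : Type*) [Field K] [Fintype K] [Algebra (ZMod 2) K] (hK : Fintype.card K = q)
    (β : K) (hβ : β ≠ 0) :
    ∃ z : K,
      z * (z + 1) * (z - β) * (z ^ 2 + z * β ^ 2 + z * β + 1) *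
        (z ^ 2 + z * β ^ 3 + z * β ^ 2 + z * β + β ^ 3 + β ^ 2 + 1) *
        (z * β ^ 3 + β + 1) * (z ^ 3 + z) ≠ 0 ∧
      Algebra.trace (ZMod 2) K
        ((z * β ^ 3 + z * β ^ 2 + z + β) * (z + β) / (z ^ 2 * β ^ 4)) = 0 :=
  stmt11_general q hq64 K hK β hβ
end

section
/- Let q be a prime power and let U = {(x, x^q + x^{q^3}, x^{q^2}) : x ∈ F_{q^4}} ⊆ F_{q^4}^3. Consider the projection map π(x) = (x^q + x^{q^3}, x^{q^2}) ∈ F_{q^4}^2. Then the unique point of the linear set L_{π(U)} of PG(1, q^4) of weight ≥ 2 is ⟨(0,1)⟩; i.e., for x, y ∈ F_{q^4} \ {0}: if x^q + x^{q^3} and y^q + y^{q^3} are not both zero, and (x^q + x^{q^3}, x^{q^2}) and (y^q + y^{q^3}, y^{q^2}) are F_{q^4}-proportional, then x and y are F_q-proportional or both x^q + x^{q^3} = 0 and y^q + y^{q^3} = 0. -/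
/-!
Write `σ` for the Frobenius `a ↦ a ^ q`, so `σ⁴ = 1`, and `y = t * x`. Proportionality of
the second coordinates forces the constant to be `σ² t`, and then, in characteristic two, the
first coordinates give `σ s * σ x = σ² s * σ³ x` for `s = t + σ t`. Applying `σ²` and
multiplying, this yields `s * σ² s = σ s * σ³ s`; since also `s + σ s + σ² s + σ³ s = 0`, we get
`(σ s + s) * (σ s + σ² s) = 0`, i.e. `σ s = s`. If `s = 0` then `t ∈ F_q`; otherwise `s` cancels
and `σ x = σ³ x`, which makes both first coordinates vanish.
-/

section CharTwo

variable {K : Type*} [Field K] [CharP K 2] (σ : K →+* K)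

lemma orbit_sum_add_apply_eq_zero (hσ : ∀ a, σ (σ (σ (σ a))) = a) (t : K) :
    let s := t + σ t
    s + σ s + σ (σ s) + σ (σ (σ s)) = 0 := by
  simp only [map_add, hσ]
  linear_combination (t + σ t + σ (σ t) + σ (σ (σ t))) * CharTwo.two_eq_zero (R := K)

lemma apply_add_apply_eq_self_of_mul_eq (hσ : ∀ a, σ (σ (σ (σ a))) = a) {t a : K}
    (ha : a ≠ 0) (h : σ (t + σ t) * a = σ (σ (t + σ t)) * σ (σ a)) :
    σ (t + σ t) = t + σ t := by
  set s := t + σ t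
  have hsum := orbit_sum_add_apply_eq_zero σ hσ t
  have h' : σ (σ (σ s)) * σ (σ a) = s * a := by
    simpa only [map_mul, hσ] using congrArg (fun z => σ (σ z)) h
  have ha' : σ (σ a) ≠ 0 := by simpa using ha
  have hprod : σ s * σ (σ (σ s)) = s * σ (σ s) :=
    mul_right_cancel₀ (mul_ne_zero ha ha') <| by
      linear_combination σ (σ (σ s)) * σ (σ a) * h + σ (σ s) * σ (σ a) * h'
  have hfac : (σ s + s) * (σ s + σ (σ s)) = 0 := by
    linear_combination σ s * hsum - hprod
  rcases mul_eq_zero.mp hfac with h1 | h1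
  · exact CharTwo.add_eq_zero.mp h1
  · exact (σ.injective (CharTwo.add_eq_zero.mp h1)).symm

lemma apply_eq_self_or_apply_add_apply_apply_apply_eq_zero (hσ : ∀ a, σ (σ (σ (σ a))) = a)
    {t x : K} (hx : x ≠ 0)
    (h : σ (t * x) + σ (σ (σ (t * x))) = σ (σ t) * (σ x + σ (σ (σ x)))) :
    σ t = t ∨ σ x + σ (σ (σ x)) = 0 := by
  have hE : σ (t + σ t) * σ x = σ (σ (t + σ t)) * σ (σ (σ x)) := by
    simp only [map_add, map_mul] at h ⊢
    linear_combination
      h + (σ (σ t) * σ x - σ (σ (σ t)) * σ (σ (σ x))) * CharTwo.two_eq_zero (R := K)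
  have hfix := apply_add_apply_eq_self_of_mul_eq σ hσ (by simpa using hx) hE
  by_cases hs : t + σ t = 0
  · exact Or.inl (CharTwo.add_eq_zero.mp hs).symm
  · right
    rw [hfix, hfix] at hE
    exact CharTwo.add_eq_zero.mpr (mul_left_cancel₀ hs hE)

end CharTwo

/-- For `q` even, in the projection of `U = {(x, x^q+x^{q^3}, x^{q^2})}` the unique point
of weight ≥ 2 is `⟨(0,1)⟩`: if `(x^q+x^{q^3}, x^{q^2})` and `(y^q+y^{q^3}, y^{q^2})` are
`F_{q^4}`-proportional and not both first coordinates vanish, then `x, y` are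
`F_q`-proportional or both first coordinates vanish. -/
theorem stmt14 (q : ℕ) (hq : ∃ p n : ℕ, p.Prime ∧ 0 < n ∧ q = p ^ n) (hq2 : Even q)
    (K : Type*) [Field K] [Fintype K] (hK : Fintype.card K = q ^ 4) :
    ∀ x y : K, x ≠ 0 → y ≠ 0 →
      ¬(x ^ q + x ^ q ^ 3 = 0 ∧ y ^ q + y ^ q ^ 3 = 0) →
      (∃ c : K, c ≠ 0 ∧ y ^ q + y ^ q ^ 3 = c * (x ^ q + x ^ q ^ 3) ∧
        y ^ q ^ 2 = c * x ^ q ^ 2) →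
      (∃ c : K, c ^ q = c ∧ y = c * x) ∨
        (x ^ q + x ^ q ^ 3 = 0 ∧ y ^ q + y ^ q ^ 3 = 0) := by
  obtain ⟨p, n, hp, -, rfl⟩ := hq
  obtain rfl : p = 2 := ((Nat.prime_dvd_prime_iff_eq Nat.prime_two hp).mp
    (Nat.prime_two.dvd_of_dvd_pow hq2.two_dvd)).symm
  have : Fact (Nat.Prime 2) := ⟨Nat.prime_two⟩
  have : CharP K 2 := charP_of_card_eq_prime_pow (f := n * 4) (by rw [hK, pow_mul])
  set σ := iterateFrobenius K 2 n
  have hpow : ∀ (a : K) (k : ℕ), a ^ (2 ^ n) ^ k = σ^[k] a := fun a k => by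
    induction k with
    | zero => simp
    | succ k ih =>
      rw [Function.iterate_succ_apply', ← ih, iterateFrobenius_def, pow_succ, pow_mul]
  have hσ (a : K) : σ (σ (σ (σ a))) = a := by
    have := FiniteField.pow_card a
    rwa [hK, hpow] at this
  have hfrob (a : K) : a ^ 2 ^ n = σ a := (iterateFrobenius_def ..).symm
  simp only [hpow, Function.iterate_succ, Function.iterate_zero, Function.comp_apply, id, hfrob]
  rintro x y hx - hnb ⟨c, -, h1, h2⟩
  obtain ⟨t, rfl⟩ : ∃ t, y = t * x := ⟨y / x, (div_mul_cancel₀ y hx).symm⟩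
  obtain rfl : c = σ (σ t) := by simpa [hx] using h2.symm
  rcases apply_eq_self_or_apply_add_apply_apply_apply_eq_zero σ hσ hx h1 with ht | hx0
  · exact Or.inl ⟨t, ht, rfl⟩
  · exact Or.inr ⟨hx0, by rw [h1, hx0, mul_zero]⟩
end
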